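/- With the setup of the spin decomposition, the expected squared displacement under the polymer Gibbs measure equals a sum of Ising two-point correlations: E_{ℙ_N^{β,h}}[‖S_N‖²] = (1/2) ∑_{i,j=1}^N [⟨σ_i σ_j⟩_{Λ_N}^{β/2, h₁} + ⟨σ_i σ_j⟩_{Λ_N}^{β/2, h₂}], where ⟨·⟩_{Λ_N}^{β,k} denotes expectation with respect to the 1D Ising Gibbs measure on {-1,1}^N with couplings V_{ij}, external field k, inverse temperature β, and free boundary conditions. -/

import Mathlib

/-! In the frame rotated by 45°, a unit step of `ℤ²` is `X = (-(σ + σ̃), σ - σ̃) / 2` for a pair of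
spins `(σ, σ̃)`. Then `⟨X_i, X_j⟩ = (σ_i σ_j + σ̃_i σ̃_j) / 2` and `⟨h, X_i⟩` is linear in `σ_i` and `σ̃_i`,
so the polymer weight splits into two independent Ising weights at inverse temperature `β / 2` with
fields `h₁ = h.1 - h.2`, `h₂ = h.1 + h.2`, while `‖S_N‖² = (M² + M̃²) / 2` for the magnetizations
`M = ∑ σ_i`, `M̃ = ∑ σ̃_i`. Expanding `M²` gives the two-point functions. -/

open Finset Real

noncomputable section

/-- The spin value `±1` associated to a Boolean. -/
def spin (b : Bool) : ℝ := if b then 1 else -1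

/-- The set of ordered pairs `i < j` of sites in `Λ_N = {1, …, N}`. -/
def pairs (N : ℕ) : Finset (Fin N × Fin N) :=
  Finset.univ.filter (fun p => p.1 < p.2)

/-- Ising Hamiltonian on `Λ_N` with free boundary conditions, coupling matrix
`J` and external field `k`: `H(σ) = -∑_{i<j} J_{ij} σ_i σ_j - k ∑_i σ_i`. -/
def isingH (N : ℕ) (J : Fin N → Fin N → ℝ) (k : ℝ) (σ : Fin N → Bool) : ℝ :=
  -(∑ p ∈ pairs N, J p.1 p.2 * spin (σ p.1) * spin (σ p.2)) -
    k * ∑ i, spin (σ i)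

/-- Ising partition function at inverse temperature `β`. -/
def isingZ (N : ℕ) (J : Fin N → Fin N → ℝ) (β k : ℝ) : ℝ :=
  ∑ σ : Fin N → Bool, exp (-β * isingH N J k σ)

/-- Ising Gibbs probability of a configuration `σ`. -/
def isingP (N : ℕ) (J : Fin N → Fin N → ℝ) (β k : ℝ) (σ : Fin N → Bool) : ℝ :=
  exp (-β * isingH N J k σ) / isingZ N J β k

/-- Two-point function `⟨σ_i σ_j⟩` of the Ising Gibbs measure. -/
def isingCorr (N : ℕ) (J : Fin N → Fin N → ℝ) (β k : ℝ) (i j : Fin N) : ℝ :=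
  ∑ σ : Fin N → Bool, spin (σ i) * spin (σ j) * isingP N J β k σ

/-- Magnetization `⟨σ_i⟩` of the Ising Gibbs measure. -/
def isingMag (N : ℕ) (J : Fin N → Fin N → ℝ) (β k : ℝ) (i : Fin N) : ℝ :=
  ∑ σ : Fin N → Bool, spin (σ i) * isingP N J β k σ

/-- The unit step of `ℤ²` associated (via the rotated-frame spin decomposition)
to a pair of spins. Each of the four spin pairs corresponds to one of the four
unit steps `±e₁, ±e₂`. -/
def stepOf : Bool × Bool → ℤ × ℤ
  | (true, true) => (-1, 0)
  | (true, false) => (0, 1)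
  | (false, true) => (0, -1)
  | (false, false) => (1, 0)

/-- Polymer Hamiltonian on `N`-step walks with increments `X`:
`ℍ_N(S) = -∑_{1≤i<j≤N} V_{ij} ⟨X_i, X_j⟩ + ⟨h, S_N⟩`, where `S_N = ∑_i X_i`. -/
def polyH (N : ℕ) (V : Fin N → Fin N → ℝ) (h : ℝ × ℝ) (X : Fin N → ℤ × ℤ) : ℝ :=
  -(∑ p ∈ pairs N, V p.1 p.2 *
      (((X p.1).1 * (X p.2).1 + (X p.1).2 * (X p.2).2 : ℤ) : ℝ)) +
    (h.1 * ((∑ i, (X i).1 : ℤ) : ℝ) + h.2 * ((∑ i, (X i).2 : ℤ) : ℝ))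

/-- Polymer partition function `ℤ_N^β(h)`; walks in `𝕎_N` are enumerated by
their spin pairs via the bijection `X_i ↔ (σ_i, σ̃_i)`. -/
def polyZ (N : ℕ) (V : Fin N → Fin N → ℝ) (β : ℝ) (h : ℝ × ℝ) : ℝ :=
  ∑ c : Fin N → Bool × Bool, exp (-β * polyH N V h (fun i => stepOf (c i)))

/-- The polymer Gibbs probability `ℙ_N^{β,h}` of a walk (encoded by spins). -/
def polyP (N : ℕ) (V : Fin N → Fin N → ℝ) (β : ℝ) (h : ℝ × ℝ)
    (c : Fin N → Bool × Bool) : ℝ :=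
  exp (-β * polyH N V h (fun i => stepOf (c i))) / polyZ N V β h

def magnetization {ι : Type*} [Fintype ι] (σ : ι → Bool) : ℝ := ∑ i, spin (σ i)

lemma stepOf_fst_eq (a b : Bool) : ((stepOf (a, b)).1 : ℝ) = -(spin a + spin b) / 2 := by
  cases a <;> cases b <;> norm_num [stepOf, spin]

lemma stepOf_snd_eq (a b : Bool) : ((stepOf (a, b)).2 : ℝ) = (spin a - spin b) / 2 := by
  cases a <;> cases b <;> norm_num [stepOf, spin]

lemma inner_stepOf_eq (a b a' b' : Bool) :
    (((stepOf (a, b)).1 * (stepOf (a', b')).1 + (stepOf (a, b)).2 * (stepOf (a', b')).2 : ℤ) : ℝ) =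
      (spin a * spin a' + spin b * spin b') / 2 := by
  push_cast
  rw [stepOf_fst_eq, stepOf_fst_eq, stepOf_snd_eq, stepOf_snd_eq]
  ring

section Walk

variable {N : ℕ} (σ τ : Fin N → Bool)

lemma sum_stepOf_fst_eq :
    ((∑ i, (stepOf (σ i, τ i)).1 : ℤ) : ℝ) = -(magnetization σ + magnetization τ) / 2 := by
  simp only [magnetization, Int.cast_sum, stepOf_fst_eq, ← sum_add_distrib, ← sum_neg_distrib,
    ← sum_div]

lemma sum_stepOf_snd_eq :
    ((∑ i, (stepOf (σ i, τ i)).2 : ℤ) : ℝ) = (magnetization σ - magnetization τ) / 2 := by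
  simp only [magnetization, Int.cast_sum, stepOf_snd_eq, ← sum_sub_distrib, ← sum_div]

lemma displacement_sq_eq :
    ((∑ i, (stepOf (σ i, τ i)).1 : ℤ) : ℝ) ^ 2 + ((∑ i, (stepOf (σ i, τ i)).2 : ℤ) : ℝ) ^ 2 =
      magnetization σ ^ 2 / 2 + magnetization τ ^ 2 / 2 := by
  rw [sum_stepOf_fst_eq, sum_stepOf_snd_eq]
  ring

lemma polyH_eq_isingH_add_isingH (V : Fin N → Fin N → ℝ) (h : ℝ × ℝ) :
    polyH N V h (fun i => stepOf (σ i, τ i)) =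
      (isingH N V (h.1 - h.2) σ + isingH N V (h.1 + h.2) τ) / 2 := by
  have hpairs : ∑ p ∈ pairs N, V p.1 p.2 *
      (((stepOf (σ p.1, τ p.1)).1 * (stepOf (σ p.2, τ p.2)).1 +
        (stepOf (σ p.1, τ p.1)).2 * (stepOf (σ p.2, τ p.2)).2 : ℤ) : ℝ) =
      ((∑ p ∈ pairs N, V p.1 p.2 * spin (σ p.1) * spin (σ p.2)) +
        ∑ p ∈ pairs N, V p.1 p.2 * spin (τ p.1) * spin (τ p.2)) / 2 := by
    rw [← sum_add_distrib, sum_div]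
    refine sum_congr rfl fun p _ => ?_
    rw [inner_stepOf_eq]
    ring
  simp only [polyH, isingH, hpairs, sum_stepOf_fst_eq, sum_stepOf_snd_eq, magnetization]
  ring

end Walk

section Ising

variable {N : ℕ} (J : Fin N → Fin N → ℝ) (β k : ℝ)

lemma isingZ_pos : 0 < isingZ N J β k :=
  sum_pos (fun _ _ => exp_pos _) univ_nonempty

lemma sum_isingP : ∑ σ, isingP N J β k σ = 1 := by
  simp only [isingP, ← sum_div]
  exact div_self (isingZ_pos J β k).ne'

lemma sum_sum_isingCorr :
    ∑ i, ∑ j, isingCorr N J β k i j = ∑ σ, magnetization σ ^ 2 * isingP N J β k σ := by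
  simp_rw [magnetization, sq, sum_mul_sum, sum_mul]
  rw [← sum_comm_cycle]
  rfl

end Ising

lemma sum_arrow_prod_eq_sum_sum {ι α β : Type*} [Fintype ι] [DecidableEq ι] [Fintype α]
    [Fintype β] (F : (ι → α × β) → ℝ) :
    ∑ c, F c = ∑ σ : ι → α, ∑ τ : ι → β, F (fun i => (σ i, τ i)) := by
  rw [← Fintype.sum_prod_type']
  exact Fintype.sum_equiv (Equiv.arrowProdEquivProdArrow ι _ _) _ _ fun _ => rfl

lemma sum_sum_add_mul_mul_of_sum_eq_one {α β : Type*} [Fintype α] [Fintype β]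
    (f p : α → ℝ) (g q : β → ℝ) (hp : ∑ a, p a = 1) (hq : ∑ b, q b = 1) :
    ∑ a, ∑ b, (f a + g b) * (p a * q b) = ∑ a, f a * p a + ∑ b, g b * q b := by
  have hsplit : ∀ a b, (f a + g b) * (p a * q b) = f a * p a * q b + p a * (g b * q b) :=
    fun _ _ => by ring
  simp only [hsplit, sum_add_distrib, ← mul_sum, ← sum_mul, hp, hq, mul_one, one_mul]

section Polymer

variable {N : ℕ} (V : Fin N → Fin N → ℝ) (β : ℝ) (h : ℝ × ℝ)

lemma polyZ_eq_isingZ_mul_isingZ :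
    polyZ N V β h = isingZ N V (β / 2) (h.1 - h.2) * isingZ N V (β / 2) (h.1 + h.2) := by
  rw [polyZ, isingZ, isingZ, sum_mul_sum, sum_arrow_prod_eq_sum_sum]
  refine sum_congr rfl fun σ _ => sum_congr rfl fun τ _ => ?_
  rw [polyH_eq_isingH_add_isingH, ← exp_add]
  ring_nf

lemma polyP_eq_isingP_mul_isingP (σ τ : Fin N → Bool) :
    polyP N V β h (fun i => (σ i, τ i)) =
      isingP N V (β / 2) (h.1 - h.2) σ * isingP N V (β / 2) (h.1 + h.2) τ := by
  rw [polyP, isingP, isingP, polyZ_eq_isingZ_mul_isingZ, polyH_eq_isingH_add_isingH,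
    div_mul_div_comm, ← exp_add]
  ring_nf

end Polymer

theorem mean_square_displacement_general (N : ℕ) (V : Fin N → Fin N → ℝ)
    (β : ℝ) (h : ℝ × ℝ) :
    (∑ c : Fin N → Bool × Bool,
        ((((∑ i, (stepOf (c i)).1 : ℤ) : ℝ)) ^ 2 +
          (((∑ i, (stepOf (c i)).2 : ℤ) : ℝ)) ^ 2) * polyP N V β h c) =
      (1 / 2) * ∑ i, ∑ j,
        (isingCorr N V (β / 2) (h.1 - h.2) i j +
          isingCorr N V (β / 2) (h.1 + h.2) i j) := by
  set P₁ := isingP N V (β / 2) (h.1 - h.2)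
  set P₂ := isingP N V (β / 2) (h.1 + h.2)
  calc _ = ∑ σ, ∑ τ, (magnetization σ ^ 2 / 2 + magnetization τ ^ 2 / 2) * (P₁ σ * P₂ τ) := by
        rw [sum_arrow_prod_eq_sum_sum]
        simp only [displacement_sq_eq, polyP_eq_isingP_mul_isingP, P₁, P₂]
    _ = ∑ σ, magnetization σ ^ 2 / 2 * P₁ σ + ∑ τ, magnetization τ ^ 2 / 2 * P₂ τ :=
        sum_sum_add_mul_mul_of_sum_eq_one _ _ _ _ (sum_isingP ..) (sum_isingP ..)
    _ = _ := by
        simp only [sum_add_distrib, sum_sum_isingCorr, mul_add, mul_sum, P₁, P₂]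
        ring_nf

/-- The expected squared displacement under the polymer Gibbs
measure equals a sum of Ising two-point correlations:
`E_{ℙ_N^{β,h}}[‖S_N‖²] = (1/2) ∑_{i,j=1}^N [⟨σ_iσ_j⟩_{Λ_N}^{β/2,h₁} +
⟨σ_iσ_j⟩_{Λ_N}^{β/2,h₂}]`, with `h₁ = ⟨h, e₁-e₂⟩`, `h₂ = ⟨h, e₁+e₂⟩`. -/
theorem mean_square_displacement (N : ℕ) (V : Fin N → Fin N → ℝ)
    (β : ℝ) (hβ : 0 < β) (h : ℝ × ℝ) :
    (∑ c : Fin N → Bool × Bool,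
        ((((∑ i, (stepOf (c i)).1 : ℤ) : ℝ)) ^ 2 +
          (((∑ i, (stepOf (c i)).2 : ℤ) : ℝ)) ^ 2) * polyP N V β h c) =
      (1 / 2) * ∑ i, ∑ j,
        (isingCorr N V (β / 2) (h.1 - h.2) i j +
          isingCorr N V (β / 2) (h.1 + h.2) i j) :=
  mean_square_displacement_general N V β h
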